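/- (Solovay splitting) Every stationary subset S of a regular uncountable cardinal κ can be split into κ pairwise disjoint stationary subsets; equivalently, NS_κ ↾ S is not κ-saturated. -/

import Mathlib

open Ordinal Set Cardinal

/-- `C` is a club (closed unbounded) subset of the ordinal `κ`. -/
def IsClubIn (C : Set Ordinal) (κ : Ordinal) : Prop :=
  C ⊆ Set.Iio κ ∧ (∀ β < κ, ∃ γ ∈ C, β < γ) ∧
    (∀ α < κ, α ≠ 0 → (∀ β < α, ∃ γ ∈ C, β < γ ∧ γ < α) → α ∈ C)

/-- `S` is stationary in `κ`: it meets every club of `κ`. -/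
def IsStationaryIn (S : Set Ordinal) (κ : Ordinal) : Prop :=
  ∀ C, IsClubIn C κ → (S ∩ C).Nonempty

/-- `S^θ_κ`, the set of ordinals below `κ` of cofinality `θ`. -/
def cofSet (κ θ : Cardinal) : Set Ordinal :=
  {α | α < κ.ord ∧ α.cof = θ}

/-!
By Fodor's lemma it suffices to find a stationary `T ⊆ S` and a regressive `f` on `T` such that
`{α ∈ T | η ≤ f α}` is stationary for every `η < κ`: the values `ξ` whose fibre `T ∩ f⁻¹{ξ}` is
stationary are then unbounded in `κ`, hence `κ` many, and these fibres are the required sets.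

If the points of countable cofinality in `S` form a stationary set, pick for each of them an
`ω`-sequence `b α` cofinal in `α`; since countably many clubs meet in a club, `f = (b · n)` works
for some `n`. Otherwise the points of uncountable cofinality in `S` are stationary, and so is the
set `T` of those among them at which `S` does not reflect. For `α ∈ T` pick a club `c α ⊆ α`
missing `T`; for a suitable `ξ`, `f α` = some point of `c α` above `ξ` works, because otherwise a
diagonal intersection would force some `α ∈ T` into `c α'` for a larger `α' ∈ T`.
-/

universe u v

section Splitting

def IsCofinalBelow (C : Set Ordinal.{u}) (α : Ordinal.{u}) : Prop :=
  ∀ β < α, ∃ γ ∈ C, β < γ ∧ γ < α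

def accIn (C : Set Ordinal.{u}) (K : Ordinal.{u}) : Set Ordinal.{u} :=
  {α | α < K ∧ α ≠ 0 ∧ IsCofinalBelow C α}

def diagInter (C : Ordinal.{u} → Set Ordinal.{u}) (K : Ordinal.{u}) : Set Ordinal.{u} :=
  {α | α < K ∧ ∀ ξ < α, α ∈ C ξ}

variable {C D S T R : Set Ordinal.{u}} {K α β : Ordinal.{u}} {κ : Cardinal.{u}}

theorem isSuccLimit_of_aleph0_lt_cof (hK : ℵ₀ < K.cof) : Order.IsSuccLimit K :=
  one_lt_cof_iff.1 (one_lt_aleph0.trans hK)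

theorem IsCofinalBelow.mono (h : IsCofinalBelow C α) (hCD : C ⊆ D) : IsCofinalBelow D α :=
  fun β hβ => let ⟨γ, hγ, hβγ, hγα⟩ := h β hβ; ⟨γ, hCD hγ, hβγ, hγα⟩

theorem IsCofinalBelow.of_accIn (h : IsCofinalBelow (accIn C K) α) : IsCofinalBelow C α := by
  intro β hβ
  obtain ⟨γ, ⟨-, -, hγ⟩, hβγ, hγα⟩ := h β hβ
  obtain ⟨δ, hδ, hβδ, hδγ⟩ := hγ β hβγ
  exact ⟨δ, hδ, hβδ, hδγ.trans hγα⟩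

theorem IsCofinalBelow.aleph0_le_cof (h : IsCofinalBelow C α) (hα : α ≠ 0) : ℵ₀ ≤ α.cof := by
  refine aleph0_le_cof_iff.2 (one_lt_cof_iff.2 (Ordinal.isSuccLimit_iff.2
    ⟨hα, Order.isSuccPrelimit_iff_succ_lt.2 fun β hβ => ?_⟩))
  obtain ⟨γ, -, hβγ, hγα⟩ := h β hβ
  exact (Order.succ_le_of_lt hβγ).trans_lt hγα

theorem IsClubIn.isCofinalBelow (hC : IsClubIn C K) : IsCofinalBelow C K := fun β hβ =>
  let ⟨γ, hγ, hβγ⟩ := hC.2.1 β hβ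
  ⟨γ, hγ, hβγ, hC.1 hγ⟩

theorem IsClubIn.mem_of_isCofinalBelow (hC : IsClubIn C K) (hαK : α < K) (hα : α ≠ 0)
    (h : IsCofinalBelow C α) : α ∈ C :=
  hC.2.2 α hαK hα h

theorem IsClubIn.accIn_subset (hC : IsClubIn C K) : accIn C K ⊆ C :=
  fun _ ⟨hαK, hα, h⟩ => hC.mem_of_isCofinalBelow hαK hα h

theorem exists_gt_cofinally_closed (hK : ℵ₀ < K.cof) {g : Ordinal.{u} → Ordinal.{u}}
    (hg : ∀ x < K, x < g x ∧ g x < K) (hβ : β < K) :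
    ∃ α < K, β < α ∧ ∀ x < α, ∃ y < α, x < y ∧ g y < α := by
  have hiter : ∀ n, g^[n] β < K := by
    intro n
    induction n with
    | zero => exact hβ
    | succ n ih => rw [Function.iterate_succ_apply']; exact (hg _ ih).2
  have hlt : ∀ n, g^[n] β < ⨆ m, g^[m] β := fun n =>
    calc g^[n] β < g^[n + 1] β := by rw [Function.iterate_succ_apply']; exact (hg _ (hiter n)).1
      _ ≤ ⨆ m, g^[m] β := Ordinal.le_iSup (fun m => g^[m] β) (n + 1)
  refine ⟨⨆ n, g^[n] β, lift_iSup_lt_of_lt_cof (by simpa using hK) hiter, hlt 0, fun x hx => ?_⟩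
  obtain ⟨n, hn⟩ := Ordinal.lt_iSup_iff.1 hx
  exact ⟨g^[n] β, hlt n, hn, by simpa only [Function.iterate_succ_apply'] using hlt (n + 1)⟩

theorem exists_gt_forall_isCofinalBelow (hK : ℵ₀ < K.cof) {ι : Type v} [Small.{u} ι]
    (hι : Cardinal.lift.{u} #ι < Cardinal.lift.{v} K.cof) {C : ι → Set Ordinal.{u}}
    (hC : ∀ i, IsCofinalBelow (C i) K) (hβ : β < K) :
    ∃ α < K, β < α ∧ ∀ i, IsCofinalBelow (C i) α := by
  choose! pick hpick using hC
  set g : Ordinal.{u} → Ordinal.{u} := fun x => Order.succ (max x (⨆ i, pick i x))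
  have hg : ∀ x < K, x < g x ∧ g x < K := fun x hx =>
    ⟨(le_max_left _ _).trans_lt (Order.lt_succ _),
      (isSuccLimit_of_aleph0_lt_cof hK).succ_lt
        (max_lt hx (lift_iSup_lt_of_lt_cof (by rwa [← lift_cof]) fun i => (hpick i x hx).2.2))⟩
  obtain ⟨α, hαK, hβα, hα⟩ := exists_gt_cofinally_closed hK hg hβ
  refine ⟨α, hαK, hβα, fun i x hx => ?_⟩
  obtain ⟨y, hyα, hxy, hgy⟩ := hα x hx
  obtain ⟨hmem, hy, -⟩ := hpick i y (hyα.trans hαK)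
  refine ⟨pick i y, hmem, hxy.trans hy, lt_of_le_of_lt ?_ hgy⟩
  exact ((Ordinal.le_iSup (pick · y) i).trans (le_max_right _ _)).trans (Order.le_succ _)

theorem isClubIn_accIn (hK : ℵ₀ < K.cof) (hC : IsCofinalBelow C K) : IsClubIn (accIn C K) K := by
  refine ⟨fun α hα => hα.1, fun β hβ => ?_, fun α hαK hα h => ⟨hαK, hα, IsCofinalBelow.of_accIn h⟩⟩
  obtain ⟨α, hαK, hβα, hα⟩ := exists_gt_forall_isCofinalBelow (ι := PUnit.{u + 1}) hK
    (by simpa using one_lt_aleph0.trans hK) (fun _ => hC) hβ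
  exact ⟨α, ⟨hαK, (zero_le.trans_lt hβα).ne', hα ⟨⟩⟩, hβα⟩

theorem IsClubIn.iInter (hK : ℵ₀ < K.cof) {ι : Type v} [Nonempty ι] [Small.{u} ι]
    (hι : Cardinal.lift.{u} #ι < Cardinal.lift.{v} K.cof) {C : ι → Set Ordinal.{u}}
    (hC : ∀ i, IsClubIn (C i) K) : IsClubIn (⋂ i, C i) K := by
  have hmem : ∀ α < K, α ≠ 0 → (∀ i, IsCofinalBelow (C i) α) → α ∈ ⋂ i, C i :=
    fun α hαK hα h => mem_iInter.2 fun i => (hC i).mem_of_isCofinalBelow hαK hα (h i)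
  refine ⟨(iInter_subset _ (Classical.arbitrary ι)).trans (hC _).1, fun β hβ => ?_,
    fun α hαK hα h => hmem α hαK hα fun i => IsCofinalBelow.mono h (iInter_subset _ i)⟩
  obtain ⟨α, hαK, hβα, hα⟩ :=
    exists_gt_forall_isCofinalBelow hK hι (fun i => (hC i).isCofinalBelow) hβ
  exact ⟨α, hmem α hαK (zero_le.trans_lt hβα).ne' hα, hβα⟩

theorem IsClubIn.inter (hK : ℵ₀ < K.cof) (hC : IsClubIn C K) (hD : IsClubIn D K) :
    IsClubIn (C ∩ D) K := by
  rw [inter_eq_iInter]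
  exact .iInter hK (by simpa using (natCast_lt_aleph0 (n := 2)).trans hK)
    (Bool.forall_bool.2 ⟨hD, hC⟩)

theorem isClubIn_Ioo (hK : Order.IsSuccLimit K) (hβ : β < K) : IsClubIn (Ioo β K) K := by
  refine ⟨fun _ h => h.2, fun γ hγ => ⟨Order.succ (max β γ), ⟨?_, hK.succ_lt (max_lt hβ hγ)⟩, ?_⟩,
    fun α hαK hα h => ⟨?_, hαK⟩⟩
  · exact (le_max_left _ _).trans_lt (Order.lt_succ _)
  · exact (le_max_right _ _).trans_lt (Order.lt_succ _)
  · obtain ⟨γ, hγ, -, hγα⟩ := h 0 (pos_iff_ne_zero.2 hα)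
    exact hγ.1.trans hγα

theorem isClubIn_diagInter (hκ : κ.IsRegular) (hκω : ℵ₀ < κ)
    {C : Ordinal.{u} → Set Ordinal.{u}} (hC : ∀ ξ < κ.ord, IsClubIn (C ξ) κ.ord) :
    IsClubIn (diagInter C κ.ord) κ.ord := by
  have hK : ℵ₀ < κ.ord.cof := by rwa [hκ.cof_ord]
  refine ⟨fun α hα => hα.1, fun β hβ => ?_, fun α hαK hα h =>
    ⟨hαK, fun ξ hξ => (hC ξ (hξ.trans hαK)).mem_of_isCofinalBelow hαK hα fun b hb => ?_⟩⟩
  · choose! pick hpick using fun ξ hξ => (hC ξ hξ).isCofinalBelow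
    set g : Ordinal.{u} → Ordinal.{u} := fun x => Order.succ (max x (⨆ ξ : Iio x, pick ξ x))
    have hg : ∀ x < κ.ord, x < g x ∧ g x < κ.ord := fun x hx =>
      ⟨(le_max_left _ _).trans_lt (Order.lt_succ _),
        (isSuccLimit_of_aleph0_lt_cof hK).succ_lt <| max_lt hx <| lift_iSup_lt_of_lt_cof
          (by rwa [← lift_cof, hκ.cof_ord, Cardinal.mk_Iio_ordinal, Cardinal.lift_lift,
            Cardinal.lift_lt, ← lt_ord])
          fun ξ => (hpick ξ (ξ.2.trans hx) x hx).2.2⟩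
    obtain ⟨α, hαK, hβα, hα⟩ := exists_gt_cofinally_closed hK hg hβ
    refine ⟨α, ⟨hαK, fun ξ hξ => (hC ξ (hξ.trans hαK)).mem_of_isCofinalBelow hαK
      (zero_le.trans_lt hβα).ne' fun b hb => ?_⟩, hβα⟩
    obtain ⟨y, hyα, hy, hgy⟩ := hα (max b ξ) (max_lt hb hξ)
    have hξy : ξ < y := (le_max_right _ _).trans_lt hy
    obtain ⟨hmem, hlt, -⟩ := hpick ξ (hξ.trans hαK) y (hyα.trans hαK)
    refine ⟨pick ξ y, hmem, ((le_max_left _ _).trans_lt hy).trans hlt, lt_of_le_of_lt ?_ hgy⟩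
    exact ((Ordinal.le_iSup (fun η : Iio y => pick η y) ⟨ξ, hξy⟩).trans
      (le_max_right _ _)).trans (Order.le_succ _)
  · obtain ⟨γ, ⟨-, hγ⟩, hbγ, hγα⟩ := h (max b ξ) (max_lt hb hξ)
    exact ⟨γ, hγ ξ ((le_max_right _ _).trans_lt hbγ), (le_max_left _ _).trans_lt hbγ, hγα⟩

theorem not_isStationaryIn_iff : ¬ IsStationaryIn S K ↔ ∃ C, IsClubIn C K ∧ ∀ α ∈ S, α ∉ C := by
  simp [IsStationaryIn, Set.Nonempty]

theorem IsStationaryIn.mono (hS : IsStationaryIn S K) (h : S ⊆ T) : IsStationaryIn T K :=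
  fun C hC => (hS C hC).mono (inter_subset_inter_left _ h)

theorem IsStationaryIn.inter (hS : IsStationaryIn S K) (hK : ℵ₀ < K.cof) (hC : IsClubIn C K) :
    IsStationaryIn (S ∩ C) K := fun _ hD =>
  let ⟨α, hαS, hαC, hαD⟩ := hS _ (hC.inter hK hD)
  ⟨α, ⟨hαS, hαC⟩, hαD⟩

theorem IsStationaryIn.nonempty (hS : IsStationaryIn S K) (hK : Order.IsSuccLimit K) :
    S.Nonempty :=
  let ⟨α, hα, _⟩ := hS _ (isClubIn_Ioo hK hK.pos)
  ⟨α, hα⟩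

theorem IsStationaryIn.exists_isStationaryIn_fiber (hκ : κ.IsRegular) (hκω : ℵ₀ < κ)
    (hT : IsStationaryIn T κ.ord) {f : Ordinal.{u} → Ordinal.{u}}
    (hf : ∀ α ∈ T, f α < α) : ∃ ξ < κ.ord, IsStationaryIn {α | α ∈ T ∧ f α = ξ} κ.ord := by
  by_contra! h
  choose! D hD hDf using fun ξ hξ => not_isStationaryIn_iff.1 (h ξ hξ)
  obtain ⟨α, hαT, hαK, hαD⟩ := hT _ (isClubIn_diagInter hκ hκω hD)
  exact hDf (f α) ((hf α hαT).trans hαK) α ⟨hαT, rfl⟩ (hαD _ (hf α hαT))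

def SplitsIntoStationary (S : Set Ordinal.{u}) (κ : Cardinal.{u}) : Prop :=
  ∃ A : Ordinal.{u} → Set Ordinal.{u}, (∀ i < κ.ord, A i ⊆ S ∧ IsStationaryIn (A i) κ.ord) ∧
    ∀ i j, i < κ.ord → j < κ.ord → i ≠ j → A i ∩ A j = ∅

def IsStationarilyUnbounded (f : Ordinal.{u} → Ordinal.{u}) (T : Set Ordinal.{u})
    (K : Ordinal.{u}) : Prop :=
  ∀ η < K, IsStationaryIn {α | α ∈ T ∧ η ≤ f α} K

theorem SplitsIntoStationary.mono (h : SplitsIntoStationary S κ) (hST : S ⊆ T) :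
    SplitsIntoStationary T κ :=
  let ⟨A, hA, hdisj⟩ := h
  ⟨A, fun i hi => ⟨(hA i hi).1.trans hST, (hA i hi).2⟩, hdisj⟩

theorem exists_club_of_not_isStationarilyUnbounded {f : Ordinal.{u} → Ordinal.{u}}
    (h : ¬ IsStationarilyUnbounded f T K) :
    ∃ η < K, ∃ D, IsClubIn D K ∧ ∀ α ∈ D, α ∈ T → f α < η := by
  simp only [IsStationarilyUnbounded, not_forall, not_isStationaryIn_iff] at h
  obtain ⟨η, hη, D, hD, hDT⟩ := h
  exact ⟨η, hη, D, hD, fun α hα hαT => lt_of_not_ge fun hle => hDT α ⟨hαT, hle⟩ hα⟩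

theorem exists_injOn_mapsTo_of_isCofinalBelow (hκ : κ.IsRegular) {X : Set Ordinal.{u}}
    (hX : IsCofinalBelow X κ.ord) :
    ∃ e : Ordinal.{u} → Ordinal.{u}, InjOn e (Iio κ.ord) ∧ MapsTo e (Iio κ.ord) X := by
  set Y : Set (Iio κ.ord) := {x | x.1 ∈ X}
  have hY : IsCofinal Y := fun x =>
    let ⟨γ, hγX, hxγ, hγK⟩ := hX x.1 x.2
    ⟨⟨γ, hγK⟩, hγX, hxγ.le⟩
  have hcard : #(Iio κ.ord) ≤ #Y := calc
    #(Iio κ.ord) = Cardinal.lift.{u + 1} κ := by rw [Cardinal.mk_Iio_ordinal, card_ord]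
    _ = Order.cof (Iio κ.ord) := by rw [cof_Iio, ← lift_cof, hκ.cof_ord]
    _ ≤ #Y := Order.cof_le hY
  obtain ⟨emb⟩ := (Cardinal.le_def _ _).1 hcard
  refine ⟨fun i => if h : i < κ.ord then (emb ⟨i, h⟩).1.1 else 0, fun i hi j hj hij => ?_,
    fun i hi => ?_⟩
  · simp only [dif_pos (mem_Iio.1 hi), dif_pos (mem_Iio.1 hj)] at hij
    exact congrArg Subtype.val (emb.injective (Subtype.ext (Subtype.ext hij)))
  · simp only [dif_pos (mem_Iio.1 hi)]
    exact (emb ⟨i, hi⟩).2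

theorem splitsIntoStationary_of_isCofinalBelow_fibers (hκ : κ.IsRegular)
    {f : Ordinal.{u} → Ordinal.{u}}
    (hf : IsCofinalBelow {ξ | IsStationaryIn {α | α ∈ T ∧ f α = ξ} κ.ord} κ.ord) :
    SplitsIntoStationary T κ := by
  obtain ⟨e, he, heX⟩ := exists_injOn_mapsTo_of_isCofinalBelow hκ hf
  refine ⟨fun i => {α | α ∈ T ∧ f α = e i}, fun i hi => ⟨fun α hα => hα.1, heX hi⟩,
    fun i j hi hj hij => eq_empty_of_forall_notMem ?_⟩
  rintro α ⟨⟨-, hαi⟩, -, hαj⟩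
  exact hij (he hi hj (hαi.symm.trans hαj))

theorem splitsIntoStationary_of_regressive (hκ : κ.IsRegular) (hκω : ℵ₀ < κ)
    {f : Ordinal.{u} → Ordinal.{u}} (hf : ∀ α ∈ T, f α < α)
    (hunb : IsStationarilyUnbounded f T κ.ord) : SplitsIntoStationary T κ := by
  have hKlim : Order.IsSuccLimit κ.ord := isSuccLimit_ord hκ.aleph0_le
  refine splitsIntoStationary_of_isCofinalBelow_fibers hκ (f := f) fun β hβ => ?_
  obtain ⟨ξ, hξK, hξ⟩ := (hunb _ (hKlim.succ_lt hβ)).exists_isStationaryIn_fiber hκ hκω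
    fun α hα => hf α hα.1
  obtain ⟨α, ⟨-, hβα⟩, rfl⟩ := hξ.nonempty hKlim
  exact ⟨f α, hξ.mono fun γ hγ => ⟨hγ.1.1, hγ.2⟩, Order.succ_le_iff.1 hβα, hξK⟩

theorem IsStationaryIn.setOf_not_isStationaryIn (hR : IsStationaryIn R K) (hK : ℵ₀ < K.cof)
    (hRcof : ∀ α ∈ R, ℵ₀ < α.cof) : IsStationaryIn {α | α ∈ R ∧ ¬ IsStationaryIn R α} K := by
  intro C hC
  obtain ⟨α, ⟨hαR, hαacc⟩, hmin⟩ := wellFounded_lt.has_min (R ∩ accIn C K)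
    (hR _ (isClubIn_accIn hK hC.isCofinalBelow))
  refine ⟨α, ⟨hαR, not_isStationaryIn_iff.2 ⟨accIn C α,
    isClubIn_accIn (hRcof α hαR) hαacc.2.2, fun γ hγR hγ => ?_⟩⟩, hC.accIn_subset hαacc⟩
  exact hmin γ ⟨hγR, hγ.1.trans hαacc.1, hγ.2⟩ hγ.1

theorem exists_isStationarilyUnbounded_of_nonreflecting (hκ : κ.IsRegular) (hκω : ℵ₀ < κ)
    (hT : IsStationaryIn T κ.ord) {c : Ordinal.{u} → Set Ordinal.{u}}
    (hc : ∀ α ∈ T, IsClubIn (c α) α) (hcT : ∀ α ∈ T, ∀ γ ∈ T, γ ∉ c α)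
    {a : Ordinal.{u} → Ordinal.{u} → Ordinal.{u}} (ha : ∀ α ∈ T, ∀ ξ < α, a α ξ ∈ c α ∧ ξ < a α ξ) :
    ∃ ξ, IsStationarilyUnbounded (a · ξ) {α | α ∈ T ∧ ξ < α} κ.ord := by
  by_contra! h
  choose η hη D hD hDη using fun ξ => exists_club_of_not_isStationarilyUnbounded (h ξ)
  have hK : ℵ₀ < κ.ord.cof := by rwa [hκ.cof_ord]
  have hKlim := isSuccLimit_of_aleph0_lt_cof hK
  set E := diagInter D κ.ord ∩ diagInter (fun ξ => Ioo (η ξ) κ.ord) κ.ord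
  have hE : IsClubIn E κ.ord := (isClubIn_diagInter hκ hκω fun ξ _ => hD ξ).inter hK
    (isClubIn_diagInter hκ hκω fun ξ _ => isClubIn_Ioo hKlim (hη ξ))
  have hEacc := isClubIn_accIn hK hE.isCofinalBelow
  obtain ⟨α, hαT, hαE⟩ := hT _ hEacc
  obtain ⟨α', hα'T, hα'E, hαα', -⟩ := hT _ (hEacc.inter hK (isClubIn_Ioo hKlim hαE.1))
  have hα'D : α' ∈ diagInter D κ.ord := (hE.accIn_subset hα'E).1
  -- for `x < β` the point `a α' x ∈ c α'` lies above `x` and below `η x < β`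
  have hEc : ∀ β ∈ E, β ≠ 0 → β < α' → β ∈ c α' := fun β hβE hβ hβα' =>
    (hc α' hα'T).mem_of_isCofinalBelow hβα' hβ fun x hx =>
      have hxα' := hx.trans hβα'
      ⟨a α' x, (ha α' hα'T x hxα').1, (ha α' hα'T x hxα').2,
        (hDη x α' (hα'D.2 x hxα') ⟨hα'T, hxα'⟩).trans (hβE.2.2 x hx).1⟩
  refine hcT α' hα'T α hαT ((hc α' hα'T).mem_of_isCofinalBelow hαα' hαE.2.1 fun x hx => ?_)
  obtain ⟨γ, hγE, hxγ, hγα⟩ := hαE.2.2 x hx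
  exact ⟨γ, hEc γ hγE (zero_le.trans_lt hxγ).ne' (hγα.trans hαα'), hxγ, hγα⟩

theorem splitsIntoStationary_of_nonreflecting (hκ : κ.IsRegular) (hκω : ℵ₀ < κ)
    (hT : IsStationaryIn T κ.ord) (hrefl : ∀ α ∈ T, ¬ IsStationaryIn T α) :
    SplitsIntoStationary T κ := by
  choose! c hc hcT using fun α hα => not_isStationaryIn_iff.1 (hrefl α hα)
  choose! a ha using fun α hα => (hc α hα).isCofinalBelow
  obtain ⟨ξ, hξ⟩ := exists_isStationarilyUnbounded_of_nonreflecting hκ hκω hT hc hcT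
    fun α hα ξ hξ => (ha α hα ξ hξ).imp_right And.left
  exact (splitsIntoStationary_of_regressive hκ hκω (fun α hα => (ha α hα.1 ξ hα.2).2.2)
    hξ).mono fun _ hα => hα.1

theorem splitsIntoStationary_of_aleph0_lt_cof (hκ : κ.IsRegular) (hκω : ℵ₀ < κ)
    (hR : IsStationaryIn R κ.ord) (hRcof : ∀ α ∈ R, ℵ₀ < α.cof) : SplitsIntoStationary R κ :=
  (splitsIntoStationary_of_nonreflecting hκ hκω
    (hR.setOf_not_isStationaryIn (by rwa [hκ.cof_ord]) hRcof)
    fun _ hα hst => hα.2 (hst.mono fun _ h => h.1)).mono fun _ h => h.1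

theorem exists_cofinal_seq_of_cof_eq_aleph0 (h : α.cof = ℵ₀) :
    ∃ b : ℕ → Ordinal.{u}, (∀ n, b n < α) ∧ ∀ x < α, ∃ n, x < b n := by
  obtain ⟨f, hf⟩ := exists_isFundamentalSeq (o := α) (by rw [h, ord_aleph0])
  refine ⟨fun n => f ⟨n, natCast_lt_omega0 n⟩, fun n => (f _).2, fun x hx => ?_⟩
  obtain ⟨_, ⟨i, rfl⟩, hi⟩ := hf.isCofinal_range ⟨x, hx⟩
  obtain ⟨n, hn⟩ := lt_omega0.1 i.2
  refine ⟨n + 1, lt_of_le_of_lt hi (hf.strictMono ?_)⟩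
  rw [← Subtype.coe_lt_coe, hn]
  exact Nat.cast_lt.2 n.lt_succ_self

theorem splitsIntoStationary_of_cof_eq_aleph0 (hκ : κ.IsRegular) (hκω : ℵ₀ < κ)
    (hR : IsStationaryIn R κ.ord) (hRcof : ∀ α ∈ R, α.cof = ℵ₀) : SplitsIntoStationary R κ := by
  choose! b hb hbR using fun α hα => exists_cofinal_seq_of_cof_eq_aleph0 (hRcof α hα)
  obtain ⟨n, hn⟩ : ∃ n, IsStationarilyUnbounded (b · n) R κ.ord := by
    by_contra! h
    choose η hη D hD hDη using fun n => exists_club_of_not_isStationarilyUnbounded (h n)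
    have hK : ℵ₀ < κ.ord.cof := by rwa [hκ.cof_ord]
    have hμ : ⨆ n, η n < κ.ord := lift_iSup_lt_of_lt_cof (by simpa using hK) hη
    obtain ⟨α, hαR, hαD, hμα, -⟩ := hR _ ((IsClubIn.iInter hK (by simpa using hK) hD).inter hK
      (isClubIn_Ioo (isSuccLimit_of_aleph0_lt_cof hK) hμ))
    obtain ⟨n, hn⟩ := hbR α hαR _ hμα
    exact (hn.trans (hDη n α (mem_iInter.1 hαD n) hαR)).not_ge (Ordinal.le_iSup η n)
  exact splitsIntoStationary_of_regressive hκ hκω (fun α hα => hb α hα n) hn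

end Splitting

theorem solovay_splitting_general (κ : Cardinal.{0}) (hκ : κ.IsRegular)
    (hκω : Cardinal.aleph0 < κ)
    (S : Set Ordinal.{0}) (hSstat : IsStationaryIn S κ.ord) :
    ∃ A : Ordinal.{0} → Set Ordinal.{0},
      (∀ i < κ.ord, A i ⊆ S ∧ IsStationaryIn (A i) κ.ord) ∧
      (∀ i j, i < κ.ord → j < κ.ord → i ≠ j → A i ∩ A j = ∅) := by
  by_cases hunc : IsStationaryIn {α | α ∈ S ∧ ℵ₀ < α.cof} κ.ord
  · exact (splitsIntoStationary_of_aleph0_lt_cof hκ hκω hunc fun _ h => h.2).mono fun _ h => h.1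
  obtain ⟨C, hC, hCS⟩ := not_isStationaryIn_iff.1 hunc
  have hK : ℵ₀ < κ.ord.cof := by rwa [hκ.cof_ord]
  have hcount : IsStationaryIn {α | α ∈ S ∧ α.cof = ℵ₀} κ.ord :=
    (hSstat.inter hK (isClubIn_accIn hK hC.isCofinalBelow)).mono fun α ⟨hαS, hαacc⟩ =>
      ⟨hαS, le_antisymm (not_lt.1 fun h => hCS α ⟨hαS, h⟩ (hC.accIn_subset hαacc))
        (hαacc.2.2.aleph0_le_cof hαacc.2.1)⟩
  exact (splitsIntoStationary_of_cof_eq_aleph0 hκ hκω hcount fun _ h => h.2).mono fun _ h => h.1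

/-- Solovay splitting: every stationary subset of a regular
uncountable `κ` splits into `κ` pairwise disjoint stationary subsets. -/
theorem solovay_splitting (κ : Cardinal.{0}) (hκ : κ.IsRegular)
    (hκω : Cardinal.aleph0 < κ)
    (S : Set Ordinal.{0}) (hSsub : S ⊆ Set.Iio κ.ord) (hSstat : IsStationaryIn S κ.ord) :
    ∃ A : Ordinal.{0} → Set Ordinal.{0},
      (∀ i < κ.ord, A i ⊆ S ∧ IsStationaryIn (A i) κ.ord) ∧
      (∀ i j, i < κ.ord → j < κ.ord → i ≠ j → A i ∩ A j = ∅) :=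
  solovay_splitting_general κ hκ hκω S hSstat
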